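/- arXiv:2501.10099 — 3 statements merged into one kernel-verified Lean document; each statement's English description precedes it below -/
import Mathlib

section
/- For α ∈ (0,1)∪(1,∞) and a joint distribution p_{X,Y} = p_X p_{Y|X} on finite alphabets, the Arimoto mutual information satisfies I_α^A(X;Y) = min over distributions q_Y of D_α(p_{X_α} p_{Y|X} ‖ p_{X_α} q_Y), where p_{X_α} is the α-tilted distribution of p_X. -/
open BigOperators

/-- `p` is a probability distribution on the finite set `X`. -/
def IsDist {X : Type*} [Fintype X] (p : X → ℝ) : Prop :=
  (∀ x, 0 ≤ p x) ∧ ∑ x, p x = 1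

/-- `W` is a channel from `X` to `Y`. -/
def IsChannel {X Y : Type*} [Fintype Y] (W : X → Y → ℝ) : Prop :=
  ∀ x, (∀ y, 0 ≤ W x y) ∧ ∑ y, W x y = 1

/-- The α-tilted (escort) distribution of `p`. -/
noncomputable def tilt {X : Type*} [Fintype X] (p : X → ℝ) (a : ℝ) : X → ℝ :=
  fun x => p x ^ a / ∑ x', p x' ^ a

/-- The Rényi entropy of order `a` of a distribution `p`. -/
noncomputable def renyi {X : Type*} [Fintype X] (p : X → ℝ) (a : ℝ) : ℝ :=
  (1 / (1 - a)) * Real.log (∑ x, p x ^ a)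

/-! Put `c y = ∑ x, p x ^ α * W x y ^ α` and let `r = tilt c (1 / α)`, so that `c` is
proportional to `r ^ α`. Factoring out the normalising constants splits the tilted divergence
`D_α(p_{X_α} W ‖ p_{X_α} q)` as `I_α^A(X;Y) + D_α(r ‖ q)`. The Rényi divergence is nonnegative
(by weighted AM-GM applied termwise) and vanishes at `q = r`, so the minimum is attained at `r`. -/

open Real Finset

section RenyiDivergence

variable {Z : Type*} [Fintype Z]

noncomputable def renyiDiv (a : ℝ) (r q : Z → ℝ) : ℝ :=
  (1 / (a - 1)) * log (∑ z, r z ^ a * q z ^ (1 - a))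

lemma rpow_mul_rpow_one_sub_le {r q α : ℝ} (hr : 0 ≤ r) (hq : 0 ≤ q) (hα0 : 0 ≤ α)
    (hα1 : α ≤ 1) : r ^ α * q ^ (1 - α) ≤ α * r + (1 - α) * q :=
  geom_mean_le_arith_mean2_weighted hα0 (sub_nonneg.2 hα1) hr hq (by ring)

/-- Weighted AM-GM with weight `1 / α` applied to `r ^ α * q ^ (1 - α)` and `q`, whose weighted
geometric mean is `r`. -/
lemma add_mul_le_rpow_mul_rpow_one_sub {r q α : ℝ} (hr : 0 ≤ r) (hq : 0 < q) (hα : 1 ≤ α) :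
    α * r + (1 - α) * q ≤ r ^ α * q ^ (1 - α) := by
  have hα0 : 0 < α := by linarith
  have hgeom : (r ^ α * q ^ (1 - α)) ^ (1 / α) * q ^ (1 - 1 / α) = r := by
    rw [mul_rpow (by positivity) (by positivity), ← rpow_mul hr, ← rpow_mul hq.le, mul_assoc,
      ← rpow_add hq, mul_one_div_cancel hα0.ne', rpow_one]
    convert mul_one r using 2
    convert rpow_zero q using 2
    field_simp
    ring
  have h := rpow_mul_rpow_one_sub_le (r := r ^ α * q ^ (1 - α)) (by positivity) hq.le
    (by positivity) ((div_le_one hα0).2 hα)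
  rw [hgeom] at h
  have h' := mul_le_mul_of_nonneg_left h hα0.le
  field_simp at h'
  linarith

lemma renyiDiv_nonneg {α : ℝ} (hα0 : 0 < α) (hα1 : α ≠ 1) {r q : Z → ℝ} (hr : IsDist r)
    (hq : IsDist q) (hqpos : ∀ z, 0 < q z) : 0 ≤ renyiDiv α r q := by
  have hmean : ∑ z, (α * r z + (1 - α) * q z) = 1 := by
    rw [sum_add_distrib, ← mul_sum, ← mul_sum, hr.2, hq.2]
    ring
  rcases hα1.lt_or_gt with hlt | hgt
  · have hsum : ∑ z, r z ^ α * q z ^ (1 - α) ≤ 1 := hmean.le.trans' <| sum_le_sum fun z _ =>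
      rpow_mul_rpow_one_sub_le (hr.1 z) (hqpos z).le hα0.le hlt.le
    refine mul_nonneg_of_nonpos_of_nonpos (by rw [one_div_nonpos]; linarith) (log_nonpos ?_ hsum)
    exact sum_nonneg fun z _ => mul_nonneg (rpow_nonneg (hr.1 z) _) (rpow_nonneg (hqpos z).le _)
  · have hsum : 1 ≤ ∑ z, r z ^ α * q z ^ (1 - α) := hmean.ge.trans <| sum_le_sum fun z _ =>
      add_mul_le_rpow_mul_rpow_one_sub (hr.1 z) (hqpos z) hgt.le
    exact mul_nonneg (by rw [one_div_nonneg]; linarith) (log_nonneg hsum)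

lemma renyiDiv_self (α : ℝ) {r : Z → ℝ} (hr : IsDist r) : renyiDiv α r r = 0 := by
  have hterm : ∀ z, r z ^ α * r z ^ (1 - α) = r z := fun z => by
    rw [← rpow_add' (hr.1 z) (by norm_num), add_sub_cancel, rpow_one]
  rw [renyiDiv, sum_congr rfl fun z _ => hterm z, hr.2, log_one, mul_zero]

end RenyiDivergence

section Tilt

variable {X : Type*} [Fintype X] {p : X → ℝ}

lemma tilt_pos (hp : ∀ x, 0 < p x) (a : ℝ) (x : X) : 0 < tilt p a x :=
  div_pos (rpow_pos_of_pos (hp x) a)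
    (sum_pos (fun x _ => rpow_pos_of_pos (hp x) a) ⟨x, mem_univ x⟩)

lemma isDist_tilt [Nonempty X] (hp : ∀ x, 0 < p x) (a : ℝ) : IsDist (tilt p a) := by
  refine ⟨fun x => (tilt_pos hp a x).le, ?_⟩
  simp only [tilt]
  rw [← sum_div, div_self]
  exact (sum_pos (fun x _ => rpow_pos_of_pos (hp x) a) univ_nonempty).ne'

end Tilt

section ArimotoDecomposition

variable {X Y : Type*} [Fintype X] [Fintype Y]

lemma sum_tilt_mul_rpow_eq (α : ℝ) {p : X → ℝ} {W : X → Y → ℝ} {q : Y → ℝ}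
    (hp : ∀ x, 0 < p x) (hW : ∀ x y, 0 ≤ W x y) (hq : ∀ y, 0 ≤ q y) :
    ∑ x, ∑ y, (tilt p α x * W x y) ^ α * (tilt p α x * q y) ^ (1 - α) =
      (∑ y, (∑ x, p x ^ α * W x y ^ α) * q y ^ (1 - α)) / ∑ x, p x ^ α := by
  have hterm : ∀ x y, (tilt p α x * W x y) ^ α * (tilt p α x * q y) ^ (1 - α) =
      p x ^ α * W x y ^ α * q y ^ (1 - α) / ∑ x, p x ^ α := fun x y => by
    have htilt := tilt_pos hp α x
    calc (tilt p α x * W x y) ^ α * (tilt p α x * q y) ^ (1 - α)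
        = tilt p α x ^ α * tilt p α x ^ (1 - α) * (W x y ^ α * q y ^ (1 - α)) := by
          rw [mul_rpow htilt.le (hW x y), mul_rpow htilt.le (hq y)]
          ring
      _ = tilt p α x * (W x y ^ α * q y ^ (1 - α)) := by
          rw [← rpow_add htilt, add_sub_cancel, rpow_one]
      _ = p x ^ α * W x y ^ α * q y ^ (1 - α) / ∑ x, p x ^ α := by
          simp only [tilt]
          ring
  simp_rw [hterm, sum_comm (γ := X), ← sum_div, ← sum_mul]

lemma sum_mul_rpow_eq_rpow_mul_sum_tilt [Nonempty Y] {α : ℝ} (hα : α ≠ 0) {c : Y → ℝ}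
    (hc : ∀ y, 0 < c y) (q : Y → ℝ) :
    ∑ y, c y * q y ^ (1 - α) =
      (∑ y, c y ^ (1 / α)) ^ α * ∑ y, tilt c (1 / α) y ^ α * q y ^ (1 - α) := by
  have hT : 0 < ∑ y, c y ^ (1 / α) := sum_pos (fun y _ => rpow_pos_of_pos (hc y) _) univ_nonempty
  have htilt : ∀ y, tilt c (1 / α) y ^ α = c y / (∑ y, c y ^ (1 / α)) ^ α := fun y => by
    simp only [tilt]
    rw [div_rpow (rpow_nonneg (hc y).le _) hT.le, one_div, rpow_inv_rpow (hc y).le hα]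
  rw [mul_sum]
  refine sum_congr rfl fun y _ => ?_
  rw [htilt, ← mul_assoc, mul_div_cancel₀ _ (rpow_pos_of_pos hT α).ne']

theorem tiltedDiv_eq_arimotoMI_add_renyiDiv [Nonempty Y] {α : ℝ} (hα0 : α ≠ 0) (hα1 : α ≠ 1)
    {p : X → ℝ} {W : X → Y → ℝ} (hp : ∀ x, 0 < p x) (hW : ∀ x y, 0 ≤ W x y)
    (hc : ∀ y, 0 < ∑ x, p x ^ α * W x y ^ α) {q : Y → ℝ} (hq : ∀ y, 0 < q y) :
    (1 / (α - 1)) * log (∑ x, ∑ y, (tilt p α x * W x y) ^ α * (tilt p α x * q y) ^ (1 - α)) =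
      renyi p α - (α / (1 - α)) * log (∑ y, (∑ x, p x ^ α * W x y ^ α) ^ (1 / α)) +
        renyiDiv α (tilt (fun y => ∑ x, p x ^ α * W x y ^ α) (1 / α)) q := by
  obtain ⟨x₀, -⟩ := exists_ne_zero_of_sum_ne_zero (hc (Classical.arbitrary Y)).ne'
  have hA : 0 < ∑ x, p x ^ α := sum_pos (fun x _ => rpow_pos_of_pos (hp x) α) ⟨x₀, mem_univ x₀⟩
  have hT : 0 < ∑ y, (∑ x, p x ^ α * W x y ^ α) ^ (1 / α) :=
    sum_pos (fun y _ => rpow_pos_of_pos (hc y) _) univ_nonempty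
  have hS : 0 < ∑ y, tilt (fun y => ∑ x, p x ^ α * W x y ^ α) (1 / α) y ^ α * q y ^ (1 - α) :=
    sum_pos (fun y _ => mul_pos (rpow_pos_of_pos (tilt_pos hc _ y) α)
      (rpow_pos_of_pos (hq y) _)) univ_nonempty
  rw [sum_tilt_mul_rpow_eq α hp hW fun y => (hq y).le,
    sum_mul_rpow_eq_rpow_mul_sum_tilt hα0 hc, renyiDiv, renyi,
    log_div (by positivity) hA.ne', log_mul (by positivity) hS.ne', log_rpow hT]
  have : α - 1 ≠ 0 := sub_ne_zero.2 hα1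
  have : 1 - α ≠ 0 := sub_ne_zero.2 hα1.symm
  field_simp
  ring

end ArimotoDecomposition

theorem arimotoMI_eq_min_renyiDiv_tilt_general {X Y : Type*} [Fintype X] [Fintype Y] [Nonempty Y]
    (α : ℝ) (hα0 : 0 < α) (hα1 : α ≠ 1)
    (p : X → ℝ) (W : X → Y → ℝ)
    (hps : ∀ x, 0 < p x) (hW : IsChannel W)
    (hWc : ∀ y, ∃ x, 0 < W x y) :
    IsLeast {v : ℝ | ∃ q : Y → ℝ, IsDist q ∧ (∀ y, 0 < q y) ∧
        v = (1 / (α - 1)) * Real.log (∑ x, ∑ y,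
              (tilt p α x * W x y) ^ α * (tilt p α x * q y) ^ (1 - α))}
      (renyi p α
        - (α / (1 - α)) * Real.log (∑ y, (∑ x, p x ^ α * W x y ^ α) ^ (1 / α))) := by
  have hc : ∀ y, 0 < ∑ x, p x ^ α * W x y ^ α := fun y => by
    obtain ⟨x₀, hx₀⟩ := hWc y
    refine sum_pos' (fun x _ => ?_) ⟨x₀, mem_univ x₀, by have := hps x₀; positivity⟩
    have := hps x
    have := (hW x).1 y
    positivity
  have hdecomp := fun q hq =>
    tiltedDiv_eq_arimotoMI_add_renyiDiv hα0.ne' hα1 hps (fun x => (hW x).1) hc (q := q) hq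
  set r := tilt (fun y => ∑ x, p x ^ α * W x y ^ α) (1 / α)
  refine ⟨⟨r, isDist_tilt hc _, tilt_pos hc _, ?_⟩, ?_⟩
  · rw [hdecomp r (tilt_pos hc _), renyiDiv_self α (isDist_tilt hc _), add_zero]
  · rintro v ⟨q, hq, hqpos, rfl⟩
    rw [hdecomp q hqpos]
    exact le_add_of_nonneg_right (renyiDiv_nonneg hα0 hα1 (isDist_tilt hc _) hq hqpos)

/-- Arimoto MI of order α: `I_α^A(X;Y) = H_α(X) - H_α^A(X|Y)` equals the minimum over
output distributions `q_Y` of the Rényi divergence `D_α(p_{X_α} p_{Y|X} ‖ p_{X_α} q_Y)`,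
where `p_{X_α}` is the α-tilted distribution of `p_X`. -/
theorem arimotoMI_eq_min_renyiDiv_tilt {X Y : Type*} [Fintype X] [Fintype Y] [Nonempty Y]
    (α : ℝ) (hα0 : 0 < α) (hα1 : α ≠ 1)
    (p : X → ℝ) (W : X → Y → ℝ)
    (hp : IsDist p) (hps : ∀ x, 0 < p x) (hW : IsChannel W)
    (hWc : ∀ y, ∃ x, 0 < W x y) :
    IsLeast {v : ℝ | ∃ q : Y → ℝ, IsDist q ∧ (∀ y, 0 < q y) ∧
        v = (1 / (α - 1)) * Real.log (∑ x, ∑ y,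
              (tilt p α x * W x y) ^ α * (tilt p α x * q y) ^ (1 - α))}
      (renyi p α
        - (α / (1 - α)) * Real.log (∑ y, (∑ x, p x ^ α * W x y ^ α) ^ (1 / α))) :=
  arimotoMI_eq_min_renyiDiv_tilt_general α hα0 hα1 p W hps hW hWc
end

section
/- For α ∈ (0,1)∪(1,∞), the Sibson mutual information of order α between distribution p_X and channel p_{Y|X} equals the Arimoto mutual information of order α between the (1/α)-tilted distribution p_{X_{1/α}} and the same channel: I_α^S(p_X, p_{Y|X}) = I_α^A(p_{X_{1/α}}, p_{Y|X}). -/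
open BigOperators

/-- The Arimoto MI `I_α^A(p, W) = H_α(p) - H_α^A(X|Y)` of distribution `p` and channel `W`. -/
noncomputable def arimotoMI {X Y : Type*} [Fintype X] [Fintype Y]
    (α : ℝ) (p : X → ℝ) (W : X → Y → ℝ) : ℝ :=
  renyi p α - (α / (1 - α)) * Real.log (∑ y, (∑ x, p x ^ α * W x y ^ α) ^ (1 / α))

/-! Put `B y = ∑ₓ p x W(y|x)^α`. The Sibson objective is `(α - 1)⁻¹ log ∑_y B y q(y)^(1-α)`, and
`∑_y B y q(y)^(1-α) = ∑_y q(y) (B y^(1/α) / q(y))^α` is a `q`-weighted mean of an `α`-th power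
whose base has `q`-mean `∑_y B y^(1/α)`. Jensen's inequality (convexity of `t^α` for `α > 1`,
concavity for `α < 1`) compares it with `(∑_y B y^(1/α))^α`, in the direction that, after the sign
of `1/(α - 1)`, makes `α/(α - 1) log ∑_y B y^(1/α)` a lower bound, with equality at the escort
`q ∝ B^(1/α)`, where the base is constant. On the Arimoto side, tilting by `1/α` turns `p(x)^α`
back into `p(x)` up to a normalizing constant, which cancels between `H_α` and `H_α^A(X|Y)`
and leaves the same value. -/

open Finset Real

theorem Real.arith_mean_rpow_le_rpow_arith_mean {ι : Type*} (s : Finset ι) (w z : ι → ℝ)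
    (hw : ∀ i ∈ s, 0 ≤ w i) (hw' : ∑ i ∈ s, w i = 1) (hz : ∀ i ∈ s, 0 ≤ z i) {p : ℝ}
    (hp₀ : 0 ≤ p) (hp₁ : p ≤ 1) :
    ∑ i ∈ s, w i * z i ^ p ≤ (∑ i ∈ s, w i * z i) ^ p := by
  simpa only [smul_eq_mul] using (concaveOn_rpow hp₀ hp₁).le_map_sum hw hw' hz

section SibsonObjective

variable {Y : Type*} [Fintype Y] {α : ℝ} {B q : Y → ℝ}

theorem sum_mul_rpow_one_sub_eq (hα : α ≠ 0) (hB : ∀ y, 0 ≤ B y) (hq : ∀ y, 0 < q y) :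
    ∑ y, B y * q y ^ (1 - α) = ∑ y, q y * (B y ^ (1 / α) / q y) ^ α := by
  refine sum_congr rfl fun y _ => ?_
  rw [div_rpow (rpow_nonneg (hB y) _) (hq y).le, ← rpow_mul (hB y), one_div_mul_cancel hα,
    rpow_one, rpow_sub (hq y), rpow_one]
  field_simp

theorem sum_mul_div_cancel_of_pos (f : Y → ℝ) (hq : ∀ y, 0 < q y) :
    ∑ y, q y * (f y / q y) = ∑ y, f y :=
  sum_congr rfl fun y _ => mul_div_cancel₀ _ (hq y).ne'

theorem rpow_sum_rpow_one_div_le_sum_mul_rpow_one_sub (hα : 1 ≤ α) (hB : ∀ y, 0 ≤ B y)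
    (hq : IsDist q) (hqpos : ∀ y, 0 < q y) :
    (∑ y, B y ^ (1 / α)) ^ α ≤ ∑ y, B y * q y ^ (1 - α) := by
  rw [sum_mul_rpow_one_sub_eq (by positivity) hB hqpos,
    ← sum_mul_div_cancel_of_pos (fun y => B y ^ (1 / α)) hqpos]
  exact rpow_arith_mean_le_arith_mean_rpow univ q _ (fun y _ => hq.1 y) hq.2
    (fun y _ => div_nonneg (rpow_nonneg (hB y) _) (hqpos y).le) hα

theorem sum_mul_rpow_one_sub_le_rpow_sum_rpow_one_div (hα₀ : 0 < α) (hα₁ : α ≤ 1)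
    (hB : ∀ y, 0 ≤ B y) (hq : IsDist q) (hqpos : ∀ y, 0 < q y) :
    ∑ y, B y * q y ^ (1 - α) ≤ (∑ y, B y ^ (1 / α)) ^ α := by
  rw [sum_mul_rpow_one_sub_eq hα₀.ne' hB hqpos,
    ← sum_mul_div_cancel_of_pos (fun y => B y ^ (1 / α)) hqpos]
  exact arith_mean_rpow_le_rpow_arith_mean univ q _ (fun y _ => hq.1 y) hq.2
    (fun y _ => div_nonneg (rpow_nonneg (hB y) _) (hqpos y).le) hα₀.le hα₁

theorem sum_mul_rpow_one_sub_escort (hα : α ≠ 0) (hB : ∀ y, 0 < B y)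
    (hS : 0 < ∑ y, B y ^ (1 / α)) :
    ∑ y, B y * (B y ^ (1 / α) / ∑ y', B y' ^ (1 / α)) ^ (1 - α) = (∑ y, B y ^ (1 / α)) ^ α := by
  set S := ∑ y, B y ^ (1 / α)
  have hq : ∀ y, 0 < B y ^ (1 / α) / S := fun y => by have := hB y; positivity
  have hconst : ∀ y, B y ^ (1 / α) / (B y ^ (1 / α) / S) = S := fun y =>
    div_div_cancel₀ (rpow_pos_of_pos (hB y) _).ne'
  rw [sum_mul_rpow_one_sub_eq hα (fun y => (hB y).le) hq]
  simp_rw [hconst, ← sum_mul]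
  rw [← sum_div, div_self hS.ne', one_mul]

theorem isLeast_sibson_objective [Nonempty Y] (hα₀ : 0 < α) (hα₁ : α ≠ 1) (hB : ∀ y, 0 < B y) :
    IsLeast {v : ℝ | ∃ q : Y → ℝ, IsDist q ∧ (∀ y, 0 < q y) ∧
        v = (1 / (α - 1)) * log (∑ y, B y * q y ^ (1 - α))}
      ((α / (α - 1)) * log (∑ y, B y ^ (1 / α))) := by
  set S := ∑ y, B y ^ (1 / α)
  have hS : 0 < S := sum_pos (fun y _ => rpow_pos_of_pos (hB y) _) univ_nonempty
  have hvalue : α / (α - 1) * log S = 1 / (α - 1) * log (S ^ α) := by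
    rw [log_rpow hS]; ring
  refine ⟨⟨fun y => B y ^ (1 / α) / S, ⟨fun y => ?_, ?_⟩, fun y => ?_, ?_⟩, ?_⟩
  · have := hB y; positivity
  · rw [← sum_div, div_self hS.ne']
  · have := hB y; positivity
  · rw [sum_mul_rpow_one_sub_escort hα₀.ne' hB hS, hvalue]
  rintro v ⟨q, hq, hqpos, rfl⟩
  have hM : 0 < ∑ y, B y * q y ^ (1 - α) :=
    sum_pos (fun y _ => mul_pos (hB y) (rpow_pos_of_pos (hqpos y) _)) univ_nonempty
  rw [hvalue]
  rcases hα₁.lt_or_gt with hlt | hgt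
  · refine mul_le_mul_of_nonpos_left (log_le_log hM ?_) (by rw [one_div_nonpos]; linarith)
    exact sum_mul_rpow_one_sub_le_rpow_sum_rpow_one_div hα₀ hlt.le (fun y => (hB y).le) hq hqpos
  · refine mul_le_mul_of_nonneg_left (log_le_log (by positivity) ?_)
      (by rw [one_div_nonneg]; linarith)
    exact rpow_sum_rpow_one_div_le_sum_mul_rpow_one_sub hgt.le (fun y => (hB y).le) hq hqpos

end SibsonObjective

section Channel

variable {X Y : Type*} [Fintype X] {α : ℝ} {p : X → ℝ} {W : X → Y → ℝ}

noncomputable def rpowMarginal (p : X → ℝ) (W : X → Y → ℝ) (α : ℝ) (y : Y) : ℝ :=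
  ∑ x, p x * W x y ^ α

theorem rpowMarginal_pos (hp : ∀ x, 0 < p x) (hW : ∀ x y, 0 ≤ W x y) {y : Y}
    (hy : ∃ x, 0 < W x y) : 0 < rpowMarginal p W α y := by
  obtain ⟨x₀, hx₀⟩ := hy
  refine sum_pos' (fun x _ => mul_nonneg (hp x).le (rpow_nonneg (hW x y) _)) ⟨x₀, mem_univ _, ?_⟩
  exact mul_pos (hp x₀) (rpow_pos_of_pos hx₀ _)

theorem sum_sum_rpow_mul_rpow_one_sub_eq [Fintype Y] (hp : ∀ x, 0 ≤ p x)
    (hW : ∀ x y, 0 ≤ W x y) {q : Y → ℝ} (hq : ∀ y, 0 ≤ q y) :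
    ∑ x, ∑ y, (p x * W x y) ^ α * (p x * q y) ^ (1 - α)
      = ∑ y, rpowMarginal p W α y * q y ^ (1 - α) := by
  rw [sum_comm]
  refine sum_congr rfl fun y _ => ?_
  rw [rpowMarginal, sum_mul]
  refine sum_congr rfl fun x _ => ?_
  rw [mul_rpow (hp x) (hW x y), mul_rpow (hp x) (hq y)]
  calc p x ^ α * W x y ^ α * (p x ^ (1 - α) * q y ^ (1 - α))
      = p x ^ (α + (1 - α)) * W x y ^ α * q y ^ (1 - α) := by
        rw [rpow_add' (hp x) (by norm_num)]; ring
    _ = p x * W x y ^ α * q y ^ (1 - α) := by norm_num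

theorem IsDist.sum_rpow_pos (hp : IsDist p) (a : ℝ) : 0 < ∑ x, p x ^ a := by
  obtain ⟨x₀, -, hx₀⟩ : ∃ x ∈ univ, (0 : X → ℝ) x < p x :=
    exists_lt_of_sum_lt (by simp [hp.2])
  exact sum_pos' (fun x _ => rpow_nonneg (hp.1 x) _) ⟨x₀, mem_univ _, rpow_pos_of_pos hx₀ _⟩

theorem tilt_one_div_rpow (hp : ∀ x, 0 ≤ p x) (hα : α ≠ 0) (x : X) :
    tilt p (1 / α) x ^ α = p x / (∑ x', p x' ^ (1 / α)) ^ α := by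
  rw [tilt, div_rpow (rpow_nonneg (hp x) _) (sum_nonneg fun x _ => rpow_nonneg (hp x) _),
    ← rpow_mul (hp x), one_div_mul_cancel hα, rpow_one]

theorem renyi_tilt_one_div (hp : IsDist p) (hα : α ≠ 0) (hα₁ : α ≠ 1) :
    renyi (tilt p (1 / α)) α = α / (α - 1) * log (∑ x, p x ^ (1 / α)) := by
  have hT := hp.sum_rpow_pos (1 / α)
  simp_rw [renyi, tilt_one_div_rpow hp.1 hα, ← sum_div, hp.2, one_div (_ ^ α), log_inv,
    log_rpow hT]
  have : 1 - α ≠ 0 := sub_ne_zero.2 hα₁.symm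
  have : α - 1 ≠ 0 := sub_ne_zero.2 hα₁
  field_simp
  ring

theorem arimotoMI_tilt_one_div [Fintype Y] (hp : IsDist p) (hW : ∀ x y, 0 ≤ W x y) (hα : α ≠ 0)
    (hα₁ : α ≠ 1) (hS : 0 < ∑ y, rpowMarginal p W α y ^ (1 / α)) :
    arimotoMI α (tilt p (1 / α)) W
      = α / (α - 1) * log (∑ y, rpowMarginal p W α y ^ (1 / α)) := by
  set T := ∑ x, p x ^ (1 / α)
  have hT : 0 < T := hp.sum_rpow_pos (1 / α)
  have hinner : ∀ y, (∑ x, tilt p (1 / α) x ^ α * W x y ^ α) ^ (1 / α)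
      = rpowMarginal p W α y ^ (1 / α) / T := fun y => by
    simp_rw [tilt_one_div_rpow hp.1 hα, div_mul_eq_mul_div, ← sum_div]
    rw [div_rpow (sum_nonneg fun x _ => mul_nonneg (hp.1 x) (rpow_nonneg (hW x y) _))
      (rpow_nonneg hT.le _), ← rpow_mul hT.le, mul_one_div_cancel hα, rpow_one, rpowMarginal]
  rw [arimotoMI, renyi_tilt_one_div hp hα hα₁]
  simp_rw [hinner]
  rw [← sum_div, log_div hS.ne' hT.ne']
  have : 1 - α ≠ 0 := sub_ne_zero.2 hα₁.symm
  have : α - 1 ≠ 0 := sub_ne_zero.2 hα₁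
  field_simp
  ring

end Channel

/-- Sibson MI of order α (as the minimum over `q_Y` of `D_α(p_X p_{Y|X} ‖ p_X q_Y)`)
equals the Arimoto MI of order α of the (1/α)-tilted input distribution and the
same channel: `I_α^S(p_X, p_{Y|X}) = I_α^A(p_{X_{1/α}}, p_{Y|X})`. -/
theorem sibsonMI_eq_arimotoMI_tilt {X Y : Type*} [Fintype X] [Fintype Y] [Nonempty Y]
    (α : ℝ) (hα0 : 0 < α) (hα1 : α ≠ 1)
    (p : X → ℝ) (W : X → Y → ℝ)
    (hp : IsDist p) (hps : ∀ x, 0 < p x) (hW : IsChannel W)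
    (hWc : ∀ y, ∃ x, 0 < W x y) :
    IsLeast {v : ℝ | ∃ q : Y → ℝ, IsDist q ∧ (∀ y, 0 < q y) ∧
        v = (1 / (α - 1)) * Real.log (∑ x, ∑ y,
              (p x * W x y) ^ α * (p x * q y) ^ (1 - α))}
      (arimotoMI α (tilt p (1 / α)) W) := by
  have hW₀ : ∀ x y, 0 ≤ W x y := fun x => (hW x).1
  have hB : ∀ y, 0 < rpowMarginal p W α y := fun y => rpowMarginal_pos hps hW₀ (hWc y)
  rw [arimotoMI_tilt_one_div hp hW₀ hα0.ne' hα1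
    (sum_pos (fun y _ => rpow_pos_of_pos (hB y) _) univ_nonempty)]
  convert isLeast_sibson_objective hα0 hα1 hB using 1
  ext v
  refine exists_congr fun q => and_congr_right fun hq => ?_
  rw [sum_sum_rpow_mul_rpow_one_sub_eq hp.1 hW₀ hq.1]
end

section
/- If the channel is noiseless, i.e., Y = X, then the Sibson mutual information of order α ∈ (0,1)∪(1,∞) equals the Rényi entropy of order 1/α: I_α^S(X;X) = H_{1/α}(X). -/
open BigOperators

/-!
After the diagonal channel collapses the double sum, the objective is
`(1/(α-1)) log ∑ₓ p x q x^(1-α)`, and `∑ₓ p x q x^(1-α) = ∑ₓ q x (p x^(1/α) / q x)^α`.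
Jensen's inequality for `t ↦ t^α` with weights `q` (concave for `α < 1`, convex for `α > 1`)
compares this with `(∑ₓ p x^(1/α))^α`, in the direction that the sign of `1/(α-1)` turns into
a lower bound `H_{1/α}(p)`. Equality holds for the escort distribution `q ∝ p^(1/α)`, which
makes the ratio `p x^(1/α) / q x` constant.
-/

open Real Finset

section

variable {ι : Type*} [Fintype ι]

lemma IsDist.nonempty {p : ι → ℝ} (hp : IsDist p) : Nonempty ι :=
  not_isEmpty_iff.mp fun _ => by simpa using hp.2

lemma sum_rpow_one_div_pos [Nonempty ι] {p : ι → ℝ} (hp : ∀ x, 0 < p x) (α : ℝ) :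
    0 < ∑ x, p x ^ (1 / α) :=
  sum_pos (fun x _ => rpow_pos_of_pos (hp x) _) univ_nonempty

lemma sum_sum_diagonal_rpow_mul_rpow [DecidableEq ι] {α : ℝ} (hα : 0 < α) {p q : ι → ℝ}
    (hp : ∀ x, 0 ≤ p x) (hq : ∀ x, 0 ≤ q x) :
    ∑ x, ∑ y, (p x * (if y = x then (1 : ℝ) else 0)) ^ α * (p x * q y) ^ (1 - α)
      = ∑ x, p x * q x ^ (1 - α) := by
  refine sum_congr rfl fun x _ => ?_
  rw [sum_eq_single x (fun y _ hyx => by rw [if_neg hyx, mul_zero, zero_rpow hα.ne', zero_mul])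
    (fun h => absurd (mem_univ x) h), if_pos rfl, mul_one, mul_rpow (hp x) (hq x), ← mul_assoc,
    ← rpow_add' (hp x) (by norm_num), add_sub_cancel, rpow_one]

lemma renyi_one_div_eq {α : ℝ} (hα0 : α ≠ 0) (hα1 : α ≠ 1) (p : ι → ℝ) :
    renyi p (1 / α) = α / (α - 1) * log (∑ x, p x ^ (1 / α)) := by
  have : α - 1 ≠ 0 := sub_ne_zero.mpr hα1
  rw [renyi]
  congr 1
  field_simp

lemma mul_div_rpow_eq_mul_rpow_one_sub {α a b : ℝ} (hα : α ≠ 0) (ha : 0 ≤ a) (hb : 0 < b) :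
    b * (a ^ (1 / α) / b) ^ α = a * b ^ (1 - α) := by
  rw [div_rpow (rpow_nonneg ha _) hb.le, one_div, rpow_inv_rpow ha hα, rpow_sub hb, rpow_one]
  ring

section Jensen

variable {α : ℝ} {p q : ι → ℝ}

lemma sum_mul_rpow_one_sub_le (hα0 : 0 < α) (hα1 : α < 1) (hp : ∀ x, 0 ≤ p x) (hq : IsDist q)
    (hqpos : ∀ x, 0 < q x) :
    ∑ x, p x * q x ^ (1 - α) ≤ (∑ x, p x ^ (1 / α)) ^ α := by
  have jensen := (concaveOn_rpow hα0.le hα1.le).le_map_sum (t := univ) (w := q)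
    (p := fun x => p x ^ (1 / α) / q x) (fun x _ => hq.1 x) hq.2
    (fun x _ => Set.mem_Ici.mpr (div_nonneg (rpow_nonneg (hp x) _) (hqpos x).le))
  simp only [smul_eq_mul, mul_div_cancel₀ _ (hqpos _).ne'] at jensen
  calc ∑ x, p x * q x ^ (1 - α)
      = ∑ x, q x * (p x ^ (1 / α) / q x) ^ α :=
        sum_congr rfl fun x _ => (mul_div_rpow_eq_mul_rpow_one_sub hα0.ne' (hp x) (hqpos x)).symm
    _ ≤ (∑ x, p x ^ (1 / α)) ^ α := jensen

lemma rpow_le_sum_mul_rpow_one_sub (hα1 : 1 < α) (hp : ∀ x, 0 ≤ p x) (hq : IsDist q)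
    (hqpos : ∀ x, 0 < q x) :
    (∑ x, p x ^ (1 / α)) ^ α ≤ ∑ x, p x * q x ^ (1 - α) := by
  have jensen := rpow_arith_mean_le_arith_mean_rpow univ q (fun x => p x ^ (1 / α) / q x)
    (fun x _ => hq.1 x) hq.2 (fun x _ => div_nonneg (rpow_nonneg (hp x) _) (hqpos x).le) hα1.le
  simp only [mul_div_cancel₀ _ (hqpos _).ne'] at jensen
  calc (∑ x, p x ^ (1 / α)) ^ α
      ≤ ∑ x, q x * (p x ^ (1 / α) / q x) ^ α := jensen
    _ = ∑ x, p x * q x ^ (1 - α) :=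
        sum_congr rfl fun x _ => mul_div_rpow_eq_mul_rpow_one_sub (by linarith) (hp x) (hqpos x)

end Jensen

lemma renyi_one_div_le {α : ℝ} (hα0 : 0 < α) (hα1 : α ≠ 1) {p q : ι → ℝ} (hp : ∀ x, 0 < p x)
    (hq : IsDist q) (hqpos : ∀ x, 0 < q x) :
    renyi p (1 / α) ≤ 1 / (α - 1) * log (∑ x, p x * q x ^ (1 - α)) := by
  have := hq.nonempty
  have hS := sum_rpow_one_div_pos hp α
  have hT : 0 < ∑ x, p x * q x ^ (1 - α) :=
    sum_pos (fun x _ => mul_pos (hp x) (rpow_pos_of_pos (hqpos x) _)) univ_nonempty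
  have hp0 : ∀ x, 0 ≤ p x := fun x => (hp x).le
  rw [renyi_one_div_eq hα0.ne' hα1, div_eq_mul_one_div α, mul_comm α, mul_assoc, ← log_rpow hS]
  rcases hα1.lt_or_gt with hlt | hgt
  · exact mul_le_mul_of_nonpos_left (log_le_log hT (sum_mul_rpow_one_sub_le hα0 hlt hp0 hq hqpos))
      (one_div_nonpos.mpr (by linarith))
  · exact mul_le_mul_of_nonneg_left
      (log_le_log (rpow_pos_of_pos hS α) (rpow_le_sum_mul_rpow_one_sub hgt hp0 hq hqpos))
      (one_div_nonneg.mpr (by linarith))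

noncomputable def escort (p : ι → ℝ) (α : ℝ) : ι → ℝ :=
  fun x => p x ^ (1 / α) / ∑ y, p y ^ (1 / α)

section Escort

variable [Nonempty ι] {p : ι → ℝ}

lemma escort_pos (hp : ∀ x, 0 < p x) (α : ℝ) (x : ι) : 0 < escort p α x :=
  div_pos (rpow_pos_of_pos (hp x) _) (sum_rpow_one_div_pos hp α)

lemma isDist_escort (hp : ∀ x, 0 < p x) (α : ℝ) : IsDist (escort p α) :=
  ⟨fun x => (escort_pos hp α x).le, by
    simp only [escort, ← sum_div, div_self (sum_rpow_one_div_pos hp α).ne']⟩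

lemma renyi_one_div_eq_log_sum_mul_escort_rpow (hp : ∀ x, 0 < p x) {α : ℝ} (hα0 : 0 < α)
    (hα1 : α ≠ 1) :
    renyi p (1 / α) = 1 / (α - 1) * log (∑ x, p x * escort p α x ^ (1 - α)) := by
  have hS := sum_rpow_one_div_pos hp α
  have hratio : ∀ x, p x ^ (1 / α) / escort p α x = ∑ y, p y ^ (1 / α) := fun x => by
    rw [escort, div_div_cancel₀ (rpow_pos_of_pos (hp x) _).ne']
  calc renyi p (1 / α)
      = 1 / (α - 1) * log (∑ x, escort p α x * (∑ y, p y ^ (1 / α)) ^ α) := by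
        rw [← sum_mul, (isDist_escort hp α).2, one_mul, log_rpow hS,
          renyi_one_div_eq hα0.ne' hα1]
        ring
    _ = 1 / (α - 1) * log (∑ x, p x * escort p α x ^ (1 - α)) := by
        congr 2
        refine sum_congr rfl fun x _ => ?_
        rw [← hratio x,
          mul_div_rpow_eq_mul_rpow_one_sub hα0.ne' (hp x).le (escort_pos hp α x)]

end Escort

end

/-- For the noiseless channel (`Y = X`, i.e. `p_{Y|X}(y|x) = 1{y = x}`), the Sibson MI
`I_α^S(X;X) = min_{q} D_α(p_X p_{Y|X} ‖ p_X q)` equals the Rényi entropy `H_{1/α}(X)`. -/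
theorem sibsonMI_noiseless {X : Type*} [Fintype X] [DecidableEq X]
    (α : ℝ) (hα0 : 0 < α) (hα1 : α ≠ 1)
    (p : X → ℝ) (hp : IsDist p) (hps : ∀ x, 0 < p x) :
    IsLeast {v : ℝ | ∃ q : X → ℝ, IsDist q ∧ (∀ y, 0 < q y) ∧
        v = (1 / (α - 1)) * Real.log (∑ x, ∑ y,
              (p x * (if y = x then (1 : ℝ) else 0)) ^ α * (p x * q y) ^ (1 - α))}
      (renyi p (1 / α)) := by
  have := hp.nonempty
  refine ⟨⟨escort p α, isDist_escort hps α, escort_pos hps α, ?_⟩, ?_⟩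
  · rw [sum_sum_diagonal_rpow_mul_rpow hα0 (fun x => (hps x).le)
      (fun x => (escort_pos hps α x).le), ← renyi_one_div_eq_log_sum_mul_escort_rpow hps hα0 hα1]
  · rintro _ ⟨q, hq, hqpos, rfl⟩
    rw [sum_sum_diagonal_rpow_mul_rpow hα0 (fun x => (hps x).le) (fun x => (hqpos x).le)]
    exact renyi_one_div_le hα0 hα1 hps hq hqpos
end
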